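/- For a stationary policy g with F(g) = F_*, if F_* = Bᶜ then q_i^g = 0 for all i ∈ Bᶜ; and if F_* = ∅ then q_i^g = 1 for all i ∈ Bᶜ. -/
import Mathlib


open Finset

variable {S A : Type*}

/-- `hitLe p B n i = P_i(τ_B ≤ n)`: the probability that the Markov chain with
transition kernel `p`, started at `i`, hits the set `B` within `n` steps. -/
noncomputable def hitLe [Fintype S] [DecidableEq S] (p : S → S → ℝ) (B : Finset S) :
    ℕ → S → ℝ
  | 0, i => if i ∈ B then 1 else 0
  | n + 1, i => if i ∈ B then 1 else ∑ j, p i j * hitLe p B n j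

/-- `hitProb p B i = P_i(τ_B < ∞)`, the probability of ever hitting `B` from `i`. -/
noncomputable def hitProb [Fintype S] [DecidableEq S] (p : S → S → ℝ) (B : Finset S)
    (i : S) : ℝ :=
  ⨆ n, hitLe p B n i

/-- `F ⊂ Bᶜ` is a `Bᶜ`-closed set of the stationary policy `g`:
`p(F | i, g(i)) = 1` for every `i ∈ F`. -/
def IsBcClosed [Fintype S] (p : S → A → S → ℝ) (B : Finset S) (g : S → A)
    (F : Finset S) : Prop :=
  (∀ i ∈ F, i ∉ B) ∧ ∀ i ∈ F, ∑ j ∈ F, p i (g i) j = 1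

/-- `Fabs p B g = F(g)`, the `Bᶜ`-absorbing set of `g`: the union of all
`Bᶜ`-closed sets of `g`. -/
def Fabs [Fintype S] (p : S → A → S → ℝ) (B : Finset S) (g : S → A) : Set S :=
  {i | ∃ F, IsBcClosed p B g F ∧ i ∈ F}

/-- `FStar Acts p B = F_* = ⋃_{g} F(g)`, the union over all stationary policies. -/
def FStar [Fintype S] (Acts : S → Finset A) (p : S → A → S → ℝ) (B : Finset S) : Set S :=
  {i | ∃ g : S → A, (∀ s, g s ∈ Acts s) ∧ i ∈ Fabs p B g}


open Filter Topology

lemma hitLe_nonneg [Fintype S] [DecidableEq S] (P : S → S → ℝ) (B : Finset S)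
    (hP0 : ∀ i j, 0 ≤ P i j) : ∀ n i, 0 ≤ hitLe P B n i := by
  intro n
  induction n with
  | zero => intro i; simp only [hitLe]; split <;> norm_num
  | succ n ih =>
    intro i; simp only [hitLe]; split
    · norm_num
    · exact Finset.sum_nonneg fun j _ => mul_nonneg (hP0 i j) (ih j)

lemma hitLe_le_one [Fintype S] [DecidableEq S] (P : S → S → ℝ) (B : Finset S)
    (hP0 : ∀ i j, 0 ≤ P i j) (hP1 : ∀ i, ∑ j, P i j = 1) :
    ∀ n i, hitLe P B n i ≤ 1 := by
  intro n
  induction n with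
  | zero => intro i; simp only [hitLe]; split <;> norm_num
  | succ n ih =>
    intro i; simp only [hitLe]; split
    · norm_num
    · calc ∑ j, P i j * hitLe P B n j ≤ ∑ j, P i j * 1 :=
            Finset.sum_le_sum fun j _ => mul_le_mul_of_nonneg_left (ih j) (hP0 i j)
        _ = 1 := by simp [hP1 i]

lemma hitLe_mono [Fintype S] [DecidableEq S] (P : S → S → ℝ) (B : Finset S)
    (hP0 : ∀ i j, 0 ≤ P i j) :
    ∀ n i, hitLe P B n i ≤ hitLe P B (n + 1) i := by
  intro n
  induction n with
  | zero =>
    intro i; simp only [hitLe]; split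
    · norm_num
    · exact Finset.sum_nonneg fun j _ => mul_nonneg (hP0 i j) (hitLe_nonneg P B hP0 0 j)
  | succ n ih =>
    intro i
    show hitLe P B (n+1) i ≤ hitLe P B (n+2) i
    simp only [hitLe]
    split
    · norm_num
    · exact Finset.sum_le_sum fun j _ => mul_le_mul_of_nonneg_left (ih j) (hP0 i j)

lemma tendsto_hitLe [Fintype S] [DecidableEq S] (P : S → S → ℝ) (B : Finset S)
    (hP0 : ∀ i j, 0 ≤ P i j) (hP1 : ∀ i, ∑ j, P i j = 1) (i : S) :
    Tendsto (fun n => hitLe P B n i) atTop (𝓝 (hitProb P B i)) := by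
  apply tendsto_atTop_ciSup
  · exact monotone_nat_of_le_succ fun n => hitLe_mono P B hP0 n i
  · exact ⟨1, fun x ⟨n, hn⟩ => hn ▸ hitLe_le_one P B hP0 hP1 n i⟩

lemma hitProb_mem [Fintype S] [DecidableEq S] (P : S → S → ℝ) (B : Finset S)
    (i : S) (hi : i ∈ B) : hitProb P B i = 1 := by
  have : ∀ n, hitLe P B n i = 1 := by
    intro n; cases n <;> simp [hitLe, hi]
  simp [hitProb, this]

lemma hitProb_fix [Fintype S] [DecidableEq S] (P : S → S → ℝ) (B : Finset S)
    (hP0 : ∀ i j, 0 ≤ P i j) (hP1 : ∀ i, ∑ j, P i j = 1) (i : S) (hi : i ∉ B) :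
    hitProb P B i = ∑ j, P i j * hitProb P B j := by
  have h1 : Tendsto (fun n => hitLe P B (n + 1) i) atTop (𝓝 (hitProb P B i)) :=
    (tendsto_hitLe P B hP0 hP1 i).comp (tendsto_add_atTop_nat 1)
  have h2 : (fun n => hitLe P B (n + 1) i) = fun n => ∑ j, P i j * hitLe P B n j := by
    funext n; simp [hitLe, hi]
  rw [h2] at h1
  have h3 : Tendsto (fun n => ∑ j, P i j * hitLe P B n j) atTop
      (𝓝 (∑ j, P i j * hitProb P B j)) :=
    tendsto_finset_sum _ fun j _ => (tendsto_hitLe P B hP0 hP1 j).const_mul _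
  exact tendsto_nhds_unique h1 h3

lemma hitProb_le_one [Fintype S] [DecidableEq S] (P : S → S → ℝ) (B : Finset S)
    (hP0 : ∀ i j, 0 ≤ P i j) (hP1 : ∀ i, ∑ j, P i j = 1) (i : S) :
    hitProb P B i ≤ 1 :=
  ciSup_le fun n => hitLe_le_one P B hP0 hP1 n i

lemma hitLe_zero_of_closed [Fintype S] [DecidableEq S] (P : S → S → ℝ) (B : Finset S)
    (hP0 : ∀ i j, 0 ≤ P i j) (hP1 : ∀ i, ∑ j, P i j = 1)
    (F : Finset S) (hB : ∀ i ∈ F, i ∉ B) (hC : ∀ i ∈ F, ∑ j ∈ F, P i j = 1) :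
    ∀ n, ∀ i ∈ F, hitLe P B n i = 0 := by
  intro n
  induction n with
  | zero => intro i hi; simp [hitLe, hB i hi]
  | succ n ih =>
    intro i hi
    simp only [hitLe, if_neg (hB i hi)]
    apply Finset.sum_eq_zero
    intro j _
    by_cases hj : j ∈ F
    · rw [ih j hj, mul_zero]
    · have h2 : ∑ k ∈ Fᶜ, P i k = 0 := by
        have := Finset.sum_add_sum_compl F (P i)
        have h1 := hC i hi
        linarith [hP1 i]
      have : P i j = 0 :=
        (Finset.sum_eq_zero_iff_of_nonneg (fun k _ => hP0 i k)).mp h2 j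
          (Finset.mem_compl.mpr hj)
      rw [this, zero_mul]

theorem stmt10 [Fintype S] [DecidableEq S]
    (Acts : S → Finset A) (p : S → A → S → ℝ) (B : Finset S)
    (hp0 : ∀ i, ∀ a ∈ Acts i, ∀ j, 0 ≤ p i a j)
    (hp1 : ∀ i, ∀ a ∈ Acts i, ∑ j, p i a j = 1)
    (g : S → A) (hg : ∀ i, g i ∈ Acts i)
    (hFg : Fabs p B g = FStar Acts p B) :
    (FStar Acts p B = {i | i ∉ B} →
      ∀ i ∈ Bᶜ, hitProb (fun i j => p i (g i) j) B i = 0)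
    ∧
    (FStar Acts p B = ∅ →
      ∀ i ∈ Bᶜ, hitProb (fun i j => p i (g i) j) B i = 1) := by
  set P : S → S → ℝ := fun i j => p i (g i) j with hP
  have hP0 : ∀ i j, 0 ≤ P i j := fun i j => hp0 i (g i) (hg i) j
  have hP1 : ∀ i, ∑ j, P i j = 1 := fun i => hp1 i (g i) (hg i)
  constructor
  · intro hF i hiB
    have hiB' : i ∉ B := Finset.mem_compl.mp hiB
    have hiF : i ∈ Fabs p B g := by
      rw [hFg, hF]; exact hiB'
    obtain ⟨F, ⟨hFB, hFC⟩, hiF⟩ := hiF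
    have hz : ∀ n, hitLe P B n i = 0 := fun n =>
      hitLe_zero_of_closed P B hP0 hP1 F hFB hFC n i hiF
    have : (fun n => hitLe P B n i) = fun _ => (0 : ℝ) := funext hz
    rw [hitProb, this, ciSup_const]
  · intro hF i hiB
    obtain ⟨i₀, -, hmin⟩ :=
      Finset.exists_min_image Finset.univ (hitProb P B) ⟨i, Finset.mem_univ i⟩
    set m := hitProb P B i₀ with hm
    have hmle : ∀ j, m ≤ hitProb P B j := fun j => hmin j (Finset.mem_univ j)
    have h1m : (1 : ℝ) ≤ m := by
      by_contra hlt
      push_neg at hlt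
      set F : Finset S := Finset.univ.filter (fun j => hitProb P B j ≤ m) with hFdef
      have hmemF : ∀ j, j ∈ F ↔ hitProb P B j = m := by
        intro j
        simp only [hFdef, Finset.mem_filter, Finset.mem_univ, true_and]
        exact ⟨fun h => le_antisymm h (hmle j), fun h => h.le⟩
      have hFB : ∀ j ∈ F, j ∉ B := by
        intro j hj hjB
        have := (hmemF j).mp hj
        rw [hitProb_mem P B j hjB] at this
        exact absurd this.le (not_le.mpr hlt)
      have hFC : ∀ j ∈ F, ∑ k ∈ F, P j k = 1 := by
        intro j hj
        have hjm : hitProb P B j = m := (hmemF j).mp hj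
        have hfix := hitProb_fix P B hP0 hP1 j (hFB j hj)
        have hsum0 : ∑ k, P j k * (hitProb P B k - m) = 0 := by
          have : ∑ k, P j k * (hitProb P B k - m)
              = (∑ k, P j k * hitProb P B k) - m * ∑ k, P j k := by
            rw [Finset.mul_sum, ← Finset.sum_sub_distrib]
            congr 1; funext k; ring
          rw [this, hP1 j, ← hfix, hjm]; ring
        have hterm : ∀ k ∈ Finset.univ, P j k * (hitProb P B k - m) = 0 :=
          (Finset.sum_eq_zero_iff_of_nonneg
            (fun k _ => mul_nonneg (hP0 j k) (sub_nonneg.mpr (hmle k)))).mp hsum0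
        have hcompl : ∑ k ∈ Fᶜ, P j k = 0 := by
          apply Finset.sum_eq_zero
          intro k hk
          have hkF : k ∉ F := Finset.mem_compl.mp hk
          have hkm : hitProb P B k ≠ m := fun h => hkF ((hmemF k).mpr h)
          have := hterm k (Finset.mem_univ k)
          rcases mul_eq_zero.mp this with h | h
          · exact h
          · exact absurd (sub_eq_zero.mp h) hkm
        have := Finset.sum_add_sum_compl F (P j)
        have h1 := hP1 j
        linarith
      have hi₀F : i₀ ∈ F := (hmemF i₀).mpr rfl
      have : i₀ ∈ Fabs p B g := ⟨F, ⟨hFB, hFC⟩, hi₀F⟩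
      rw [hFg, hF] at this
      exact this
    exact le_antisymm (hitProb_le_one P B hP0 hP1 i) (le_trans h1m (hmle i))
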